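/- (Matrix estimate for a row operation.) Fix nonnegative integers q,r,s,t and rationals r', s' with r' + s' = r + s. Let R = O_{F,[0,p^{-1/m}]} with valuation v_R and H_v = {f : v_R(f) ≥ v}. Let D ∈ M_2(R) with entries D_{11} ∈ H_{r'+γ}, D_{12} ∈ H_{r+γ}, D_{21} ∈ H_{s+γ}, D_{22} ∈ H_{s'+γ} for some γ > 0. Suppose n ≥ 0 satisfies n(p-1) + r' - s' ≥ 0 and f ∈ H_{r'-s+γ'} ∩ u^n R with γ' > 0. Then, writing A = [[1,-f],[0,1]] and A *_φ D := A D φ(A)^{-1} (φ the Frobenius u ↦ u^p applied entrywise), the difference A *_φ D - D has (1,1)-entry in H_{r'+γ+γ'}, (1,2)-entry in H_{r+γ+γ'}, (2,1)-entry equal to 0, and (2,2)-entry in H_{r'+γ+n(p-1)+γ'} ⊆ H_{s'+γ+γ'}. -/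

import Mathlib

open PowerSeries Filter

noncomputable section

/-- `Hge m vp v f` says the Gauss valuation `v_R(f) = min_i (i + m * vp (a_i))` is `≥ v`. -/
def Hge {F : Type*} [Field F] (m : ℝ) (vp : F → ℝ) (v : ℝ) (f : PowerSeries F) : Prop :=
  ∀ i : ℕ, (PowerSeries.coeff (R := F) i) f ≠ 0 → v ≤ (i : ℝ) + m * vp ((PowerSeries.coeff (R := F) i) f)

/-- `vReq m vp f v` says `v_R(f) = v`: it is a lower bound and it is attained. -/
def vReq {F : Type*} [Field F] (m : ℝ) (vp : F → ℝ) (f : PowerSeries F) (v : ℝ) : Prop :=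
  Hge m vp v f ∧ ∃ i : ℕ, (PowerSeries.coeff (R := F) i) f ≠ 0 ∧
    (i : ℝ) + m * vp ((PowerSeries.coeff (R := F) i) f) = v

/-- membership in `R = O_{F,[0,p^{-1/m}]}`: `i + m * vp (a_i) → ∞`. -/
def MemR {F : Type*} [Field F] (m : ℝ) (vp : F → ℝ) (f : PowerSeries F) : Prop :=
  ∀ N : ℝ, ∀ᶠ i : ℕ in Filter.atTop,
    (PowerSeries.coeff (R := F) i) f = 0 ∨ N ≤ (i : ℝ) + m * vp ((PowerSeries.coeff (R := F) i) f)

/-- The Frobenius `φ` on power series: substitution `u ↦ u^p`. -/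
def phiF {F : Type*} [Field F] (p : ℕ) (f : PowerSeries F) : PowerSeries F :=
  PowerSeries.mk fun n => if p ∣ n then (PowerSeries.coeff (R := F) (n / p)) f else 0

/-- Formal derivative `d/du` of a power series. -/
def dWrt {F : Type*} [Field F] (f : PowerSeries F) : PowerSeries F :=
  PowerSeries.mk fun n => ((n : F) + 1) * (PowerSeries.coeff (R := F) (n + 1)) f

/-!
Conjugating by the row operation gives
`A *_φ D - D = [[-f D₂₁, (D₁₁ - f D₂₁) φ(f) - f D₂₂], [0, D₂₁ φ(f)]]`, in which `D₁₂` cancels.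
The Gauss valuation satisfies `v_R(gh) ≥ v_R(g) + v_R(h)` and `v_R(g ± h) ≥ min (v_R g) (v_R h)`,
and `v_R(φ f) ≥ v_R(f) + n(p-1)` because `u^n ∣ f`; the bounds on the entries then follow by
adding exponents, using `r' + s' = r + s` and `n(p-1) + r' - s' ≥ 0`.
-/

section Valuation

variable {F : Type*} [Field F] {vp : F → ℝ}

lemma vp_neg (hvp_mul : ∀ x y : F, x ≠ 0 → y ≠ 0 → vp (x * y) = vp x + vp y) (x : F) :
    vp (-x) = vp x := by
  rcases eq_or_ne x 0 with rfl | hx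
  · rw [neg_zero]
  have h_one : vp (1 : F) = 0 := by
    have := hvp_mul 1 1 one_ne_zero one_ne_zero
    rw [one_mul] at this
    linarith
  have h_neg_one : vp (-1 : F) = 0 := by
    have := hvp_mul (-1) (-1) (neg_ne_zero.mpr one_ne_zero) (neg_ne_zero.mpr one_ne_zero)
    rw [neg_mul_neg, one_mul, h_one] at this
    linarith
  rw [neg_eq_neg_one_mul, hvp_mul _ _ (neg_ne_zero.mpr one_ne_zero) hx, h_neg_one, zero_add]

lemma exists_vp_le_vp_sum
    (hvp_add : ∀ x y : F, x ≠ 0 → y ≠ 0 → x + y ≠ 0 → min (vp x) (vp y) ≤ vp (x + y))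
    {ι : Type*} (s : Finset ι) (x : ι → F) (hs : ∑ i ∈ s, x i ≠ 0) :
    ∃ i ∈ s, x i ≠ 0 ∧ vp (x i) ≤ vp (∑ i ∈ s, x i) := by
  induction s using Finset.cons_induction with
  | empty => simp at hs
  | cons a s ha ih =>
    rw [Finset.sum_cons] at hs ⊢
    by_cases hxa : x a = 0
    · rw [hxa, zero_add] at hs ⊢
      obtain ⟨i, hi, hxi, hle⟩ := ih hs
      exact ⟨i, Finset.mem_cons_of_mem hi, hxi, hle⟩
    by_cases hrest : ∑ i ∈ s, x i = 0
    · rw [hrest, add_zero]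
      exact ⟨a, Finset.mem_cons_self a s, hxa, le_rfl⟩
    obtain ⟨i, hi, hxi, hle⟩ := ih hrest
    have hmin := hvp_add _ _ hxa hrest hs
    rcases min_choice (vp (x a)) (vp (∑ i ∈ s, x i)) with h | h <;> rw [h] at hmin
    · exact ⟨a, Finset.mem_cons_self a s, hxa, hmin⟩
    · exact ⟨i, Finset.mem_cons_of_mem hi, hxi, hle.trans hmin⟩

end Valuation

namespace Hge

variable {F : Type*} [Field F] {m : ℝ} {vp : F → ℝ} {v w : ℝ} {f g : PowerSeries F}

lemma mono (hf : Hge m vp v f) (hwv : w ≤ v) : Hge m vp w f :=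
  fun i hi => hwv.trans (hf i hi)

lemma neg (hvp_mul : ∀ x y : F, x ≠ 0 → y ≠ 0 → vp (x * y) = vp x + vp y)
    (hf : Hge m vp v f) : Hge m vp v (-f) := by
  intro i hi
  rw [map_neg, neg_ne_zero] at hi
  rw [map_neg, vp_neg hvp_mul]
  exact hf i hi

lemma add (hvp_add : ∀ x y : F, x ≠ 0 → y ≠ 0 → x + y ≠ 0 → min (vp x) (vp y) ≤ vp (x + y))
    (hm : 0 ≤ m) (hf : Hge m vp v f) (hg : Hge m vp v g) : Hge m vp v (f + g) := by
  intro i hi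
  rw [map_add] at hi ⊢
  by_cases hfi : coeff i f = 0
  · rw [hfi, zero_add] at hi ⊢
    exact hg i hi
  by_cases hgi : coeff i g = 0
  · rw [hgi, add_zero] at hi ⊢
    exact hf i hi
  have hmin := mul_le_mul_of_nonneg_left (hvp_add _ _ hfi hgi hi) hm
  rcases min_choice (vp (coeff i f)) (vp (coeff i g)) with h | h <;> rw [h] at hmin
  · linarith [hf i hfi]
  · linarith [hg i hgi]

lemma sub (hvp_mul : ∀ x y : F, x ≠ 0 → y ≠ 0 → vp (x * y) = vp x + vp y)
    (hvp_add : ∀ x y : F, x ≠ 0 → y ≠ 0 → x + y ≠ 0 → min (vp x) (vp y) ≤ vp (x + y))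
    (hm : 0 ≤ m) (hf : Hge m vp v f) (hg : Hge m vp v g) : Hge m vp v (f - g) :=
  sub_eq_add_neg f g ▸ hf.add hvp_add hm (hg.neg hvp_mul)

lemma mul (hvp_mul : ∀ x y : F, x ≠ 0 → y ≠ 0 → vp (x * y) = vp x + vp y)
    (hvp_add : ∀ x y : F, x ≠ 0 → y ≠ 0 → x + y ≠ 0 → min (vp x) (vp y) ≤ vp (x + y))
    (hm : 0 ≤ m) (hf : Hge m vp v f) (hg : Hge m vp w g) : Hge m vp (v + w) (f * g) := by
  intro k hk
  rw [coeff_mul] at hk ⊢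
  obtain ⟨⟨i, j⟩, hij, hne, hle⟩ := exists_vp_le_vp_sum hvp_add _ _ hk
  have hk_eq : (i : ℝ) + j = k := by exact_mod_cast Finset.HasAntidiagonal.mem_antidiagonal.mp hij
  have hfi : coeff i f ≠ 0 := left_ne_zero_of_mul hne
  have hgj : coeff j g ≠ 0 := right_ne_zero_of_mul hne
  rw [hvp_mul _ _ hfi hgj] at hle
  have := mul_le_mul_of_nonneg_left hle hm
  linarith [hf i hfi, hg j hgj]

lemma phiF {p n : ℕ} (hp : 1 ≤ p) (hf : Hge m vp v f) (hfn : (X : PowerSeries F) ^ n ∣ f) :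
    Hge m vp (v + n * ((p : ℝ) - 1)) (phiF p f) := by
  intro k hk
  rw [_root_.phiF, coeff_mk] at hk ⊢
  split_ifs at hk ⊢ with hpk
  · obtain ⟨j, rfl⟩ := hpk
    rw [Nat.mul_div_cancel_left j hp] at hk ⊢
    have hnj : (n : ℝ) ≤ j := by
      by_contra! hjn
      exact hk (X_pow_dvd_iff.mp hfn j (by exact_mod_cast hjn))
    have hp1 : (0 : ℝ) ≤ p - 1 := by
      rw [sub_nonneg]
      exact_mod_cast hp
    push_cast
    nlinarith [hf j hk]
  · exact absurd rfl hk

end Hge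

lemma rowOp_mul_sub {R : Type*} [CommRing R] (a b : R) (D : Matrix (Fin 2) (Fin 2) R) :
    !![1, -a; 0, 1] * D * !![1, b; 0, 1] - D =
      !![-(a * D 1 0), (D 0 0 - a * D 1 0) * b - a * D 1 1; 0, D 1 0 * b] := by
  rw [Matrix.eta_fin_two D, Matrix.mul_fin_two, Matrix.mul_fin_two]
  ext i j
  fin_cases i <;> fin_cases j <;> simp [sub_eq_add_neg, add_assoc]

theorem stmt_12_general {F : Type*} [Field F] (p : ℕ) (hp : p.Prime) (m : ℝ) (hm : 1 < m)
    (vp : F → ℝ)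
    (hvp_mul : ∀ x y : F, x ≠ 0 → y ≠ 0 → vp (x * y) = vp x + vp y)
    (hvp_add : ∀ x y : F, x ≠ 0 → y ≠ 0 → x + y ≠ 0 → min (vp x) (vp y) ≤ vp (x + y))
    (r s : ℕ) (r' s' : ℝ) (hsum : r' + s' = (r : ℝ) + s)
    (γ γ' : ℝ) (hγ' : 0 < γ')
    (D : Matrix (Fin 2) (Fin 2) (PowerSeries F))
    (hD11 : Hge m vp (r' + γ) (D 0 0))
    (hD21 : Hge m vp ((s : ℝ) + γ) (D 1 0)) (hD22 : Hge m vp (s' + γ) (D 1 1))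
    (n : ℕ) (hn : 0 ≤ (n : ℝ) * ((p : ℝ) - 1) + r' - s')
    (f : PowerSeries F) (hf : Hge m vp (r' - (s : ℝ) + γ') f)
    (hfd : (PowerSeries.X : PowerSeries F) ^ n ∣ f) :
    let M := (!![1, -f; 0, 1] : Matrix (Fin 2) (Fin 2) (PowerSeries F)) * D *
      !![1, phiF p f; 0, 1]
    Hge m vp (r' + γ + γ') ((M - D) 0 0) ∧
      Hge m vp ((r : ℝ) + γ + γ') ((M - D) 0 1) ∧
      (M - D) 1 0 = 0 ∧
      Hge m vp (r' + γ + (n : ℝ) * ((p : ℝ) - 1) + γ') ((M - D) 1 1) ∧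
      Hge m vp (s' + γ + γ') ((M - D) 1 1) := by
  intro M
  have hm0 : 0 ≤ m := by linarith
  have hφf := hf.phiF hp.one_le hfd
  have hfD21 := hf.mul hvp_mul hvp_add hm0 hD21
  have hD21φf := hD21.mul hvp_mul hvp_add hm0 hφf
  have hrow := (hD11.sub hvp_mul hvp_add hm0 (hfD21.mono (by linarith))).mul
    hvp_mul hvp_add hm0 hφf
  have hfD22 := hf.mul hvp_mul hvp_add hm0 hD22
  simp only [M, rowOp_mul_sub, Matrix.of_apply, Matrix.cons_val', Matrix.cons_val_zero,
    Matrix.cons_val_one, Matrix.empty_val', Matrix.cons_val_fin_one]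
  refine ⟨(hfD21.neg hvp_mul).mono (by linarith), ?_, trivial, hD21φf.mono (by linarith),
    hD21φf.mono (by linarith)⟩
  exact (hrow.mono (by linarith)).sub hvp_mul hvp_add hm0 (hfD22.mono (by linarith))

/-- matrix estimate for the row operation `D ↦ A D φ(A)⁻¹`
with `A = [[1,-f],[0,1]]`, so `φ(A)⁻¹ = [[1,φ(f)],[0,1]]`. -/
theorem stmt_12 {F : Type*} [Field F] (p : ℕ) (hp : p.Prime) (m : ℝ) (hm : 1 < m)
    (vp : F → ℝ)
    (hvp_mul : ∀ x y : F, x ≠ 0 → y ≠ 0 → vp (x * y) = vp x + vp y)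
    (hvp_add : ∀ x y : F, x ≠ 0 → y ≠ 0 → x + y ≠ 0 → min (vp x) (vp y) ≤ vp (x + y))
    (q r s t : ℕ) (r' s' : ℝ) (hsum : r' + s' = (r : ℝ) + s)
    (γ γ' : ℝ) (hγ : 0 < γ) (hγ' : 0 < γ')
    (D : Matrix (Fin 2) (Fin 2) (PowerSeries F))
    (hD11 : Hge m vp (r' + γ) (D 0 0)) (hD12 : Hge m vp ((r : ℝ) + γ) (D 0 1))
    (hD21 : Hge m vp ((s : ℝ) + γ) (D 1 0)) (hD22 : Hge m vp (s' + γ) (D 1 1))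
    (n : ℕ) (hn : 0 ≤ (n : ℝ) * ((p : ℝ) - 1) + r' - s')
    (f : PowerSeries F) (hf : Hge m vp (r' - (s : ℝ) + γ') f)
    (hfd : (PowerSeries.X : PowerSeries F) ^ n ∣ f) :
    let M := (!![1, -f; 0, 1] : Matrix (Fin 2) (Fin 2) (PowerSeries F)) * D *
      !![1, phiF p f; 0, 1]
    Hge m vp (r' + γ + γ') ((M - D) 0 0) ∧
      Hge m vp ((r : ℝ) + γ + γ') ((M - D) 0 1) ∧
      (M - D) 1 0 = 0 ∧
      Hge m vp (r' + γ + (n : ℝ) * ((p : ℝ) - 1) + γ') ((M - D) 1 1) ∧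
      Hge m vp (s' + γ + γ') ((M - D) 1 1) :=
  stmt_12_general p hp m hm vp hvp_mul hvp_add r s r' s' hsum γ γ' hγ' D hD11 hD21 hD22 n hn f hf
    hfd
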